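/- arXiv:2602.21352 — 5 statements merged into one kernel-verified Lean document; each statement's English description precedes it below -/
import Mathlib

section
/- Let L ∈ (0,1), set θ* = (2 − L − 2√(1−L))/L and r* = 1 − √(1−L). If y : ℕ → ℝ satisfies the linearized optimal accelerated rearrangement recurrence y_{k+1} = (1+θ*)L·y_k − θ*L·y_{k−1} for all k ≥ 1, then there exists a constant C ≥ 0 such that |y_k| ≤ C·(k+1)·(r*)^k for all k ∈ ℕ; in particular y_k → 0 geometrically with rate constant r* < L. -/
/-- Let `L ∈ (0,1)`, `θ* = (2 − L − 2√(1−L))/L` and `r* = 1 − √(1−L)`. If `y : ℕ → ℝ`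
satisfies the linearized optimal accelerated rearrangement recurrence
`y (k+1) = (1+θ*)L·y k − θ*L·y (k−1)` for all `k ≥ 1`, then there is a constant
`C ≥ 0` with `|y k| ≤ C (k+1) (r*)^k` for all `k`; in particular `y k → 0`
geometrically with rate constant `r* < L`. -/
theorem arm_linearized_geometric_decay (L θ r : ℝ) (hL0 : 0 < L) (hL1 : L < 1)
    (hθ : θ = (2 - L - 2 * Real.sqrt (1 - L)) / L)
    (hr : r = 1 - Real.sqrt (1 - L))
    (y : ℕ → ℝ)
    (hrec : ∀ k : ℕ, 1 ≤ k → y (k + 1) = (1 + θ) * L * y k - θ * L * y (k - 1)) :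
    (∃ C : ℝ, 0 ≤ C ∧ ∀ k : ℕ, |y k| ≤ C * (k + 1) * r ^ k) ∧
      Filter.Tendsto y Filter.atTop (nhds 0) ∧ r < L := by
  set s := Real.sqrt (1 - L) with hs
  have hs0 : 0 < s := Real.sqrt_pos.mpr (by linarith)
  have hs1 : s < 1 := by
    have : s ^ 2 = 1 - L := Real.sq_sqrt (by linarith)
    nlinarith
  have hssq : s ^ 2 = 1 - L := Real.sq_sqrt (by linarith)
  have hr0 : 0 < r := by rw [hr]; linarith
  have hr1 : r < 1 := by rw [hr]; linarith
  have hrL : r < L := by rw [hr]; nlinarith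
  have hθL : θ * L = r ^ 2 := by
    rw [hθ, hr]; field_simp; nlinarith
  have h1θL : (1 + θ) * L = 2 * r := by
    have : L = 1 - s ^ 2 := by linarith
    rw [hθ]; field_simp; rw [hr]; nlinarith
  set A := y 0 with hA
  set B := y 1 / r - y 0 with hB
  have key : ∀ m : ℕ, y m = (A + B * m) * r ^ m ∧
      y (m + 1) = (A + B * (m + 1)) * r ^ (m + 1) := by
    intro m
    induction m with
    | zero =>
      constructor
      · simp [hA]
      · push_cast
        rw [hB]; field_simp; ring
    | succ n ih =>
      refine ⟨by exact_mod_cast ih.2, ?_⟩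
      have h := hrec (n + 1) (by omega)
      simp only [Nat.add_sub_cancel] at h
      rw [h, h1θL, hθL, ih.1, ih.2]
      push_cast
      ring
  refine ⟨⟨|A| + |B|, by positivity, ?_⟩, ?_, hrL⟩
  · intro k
    have hk := (key k).1
    rw [hk, abs_mul, abs_pow, abs_of_pos hr0]
    have hb : |A + B * k| ≤ (|A| + |B|) * (k + 1) := by
      have h1 : |A + B * k| ≤ |A| + |B| * k := by
        calc |A + B * k| ≤ |A| + |B * k| := abs_add_le _ _
        _ = |A| + |B| * k := by rw [abs_mul, Nat.abs_cast]
      have : (0:ℝ) ≤ k := Nat.cast_nonneg k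
      nlinarith [abs_nonneg A, abs_nonneg B]
    calc |A + B * k| * r ^ k ≤ (|A| + |B|) * (k + 1) * r ^ k := by
          exact mul_le_mul_of_nonneg_right hb (by positivity)
      _ = (|A| + |B|) * (↑k + 1) * r ^ k := by ring
  · have hb : Filter.Tendsto (fun k : ℕ => (A + B * k) * r ^ k) Filter.atTop (nhds 0) := by
      have h1 : Filter.Tendsto (fun k : ℕ => A * r ^ k) Filter.atTop (nhds 0) := by
        simpa using (tendsto_pow_atTop_nhds_zero_of_lt_one hr0.le hr1).const_mul A
      have h2 : Filter.Tendsto (fun k : ℕ => B * (k * r ^ k)) Filter.atTop (nhds 0) := by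
        simpa using (tendsto_self_mul_const_pow_of_lt_one hr0.le hr1).const_mul B
      have := h1.add h2
      simp only [add_zero] at this
      exact this.congr (fun k => by ring)
    exact hb.congr (fun k => ((key k).1).symm)
end

section
/- Fix real numbers 0 < f₋ < f₊ and δ > 0, and define h₀ : ℝ → ℝ by h₀(y) = y − (2/(f₊ − f₋))·[ f₊δ − √( f₊²δ² − yδ(f₊ − f₋)(f₋ + δ(f₊ − f₋)) ) ]. Then h₀(0) = 0 and h₀ is differentiable at 0 with derivative h₀′(0) = (1 − f₋/f₊)(1 − δ) = L; moreover if additionally δ < 1 then 0 < L < 1. -/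
/-!
Writing `a = f₊δ`, `b = δ(f₊ − f₋)(f₋ + δ(f₊ − f₋))` and `c = 2/(f₊ − f₋)`, the map is
`h₀(y) = y − c(a − √(a² − yb))` with `a > 0`, so `h₀(0) = 0` because `√(a²) = a`, and the chain
rule gives `h₀′(0) = 1 − cb/(2a) = 1 − (f₋ + δ(f₊ − f₋))/f₊ = (1 − f₋/f₊)(1 − δ)`.
-/

open Real

theorem hasDerivAt_sub_mul_sub_sqrt_sq_sub_mul {a : ℝ} (ha : 0 < a) (b c : ℝ) :
    HasDerivAt (fun y : ℝ => y - c * (a - √(a ^ 2 - y * b))) (1 - c * b / (2 * a)) 0 := by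
  have hinner : HasDerivAt (fun y : ℝ => a ^ 2 - y * b) (-b) 0 := by
    simpa using (hasDerivAt_mul_const b).const_sub (a ^ 2)
  have hsqrt := (hasDerivAt_sqrt (x := a ^ 2 - 0 * b) (by simp [ha.ne'])).comp 0 hinner
  have hmap := (hasDerivAt_id 0).sub ((hsqrt.const_sub a).const_mul c)
  refine hmap.congr_deriv ?_
  rw [zero_mul, sub_zero, sqrt_sq ha.le]
  field_simp

theorem one_sub_div_mul_one_sub_mem_Ioo {fm fp δ : ℝ} (hfm : 0 < fm) (hfmfp : fm < fp)
    (hδ : 0 ≤ δ) (hδ1 : δ < 1) : (1 - fm / fp) * (1 - δ) ∈ Set.Ioo 0 1 := by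
  have hfp : 0 < fp := hfm.trans hfmfp
  have hratio_pos : 0 < 1 - fm / fp := sub_pos.mpr ((div_lt_one hfp).mpr hfmfp)
  have hratio_lt : 1 - fm / fp < 1 := sub_lt_self 1 (div_pos hfm hfp)
  exact ⟨mul_pos hratio_pos (sub_pos.mpr hδ1),
    mul_lt_one_of_nonneg_of_lt_one_left hratio_pos.le hratio_lt (sub_le_self 1 hδ)⟩

/-- Fix `0 < f₋ < f₊` and `δ > 0`, and define
`h₀(y) = y − (2/(f₊ − f₋))·[ f₊δ − √( f₊²δ² − yδ(f₊ − f₋)(f₋ + δ(f₊ − f₋)) ) ]`.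
Then `h₀ 0 = 0` and `h₀` is differentiable at `0` with derivative
`h₀′(0) = (1 − f₋/f₊)(1 − δ) = L`; moreover if additionally `δ < 1` then `0 < L < 1`. -/
theorem rearrangement_map_linearization (fm fp δ : ℝ)
    (hfm : 0 < fm) (hfmfp : fm < fp) (hδ : 0 < δ) :
    (fun y : ℝ => y - (2 / (fp - fm)) *
        (fp * δ - Real.sqrt (fp ^ 2 * δ ^ 2 -
          y * δ * (fp - fm) * (fm + δ * (fp - fm))))) 0 = 0 ∧
    HasDerivAt (fun y : ℝ => y - (2 / (fp - fm)) *
        (fp * δ - Real.sqrt (fp ^ 2 * δ ^ 2 -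
          y * δ * (fp - fm) * (fm + δ * (fp - fm)))))
      ((1 - fm / fp) * (1 - δ)) 0 ∧
    (δ < 1 → 0 < (1 - fm / fp) * (1 - δ) ∧ (1 - fm / fp) * (1 - δ) < 1) := by
  have hfp : 0 < fp := hfm.trans hfmfp
  have hgap : fp - fm ≠ 0 := (sub_pos.mpr hfmfp).ne'
  have ha : 0 < fp * δ := mul_pos hfp hδ
  set b := δ * (fp - fm) * (fm + δ * (fp - fm))
  have hmap : (fun y : ℝ => y - (2 / (fp - fm)) *
      (fp * δ - √(fp ^ 2 * δ ^ 2 - y * δ * (fp - fm) * (fm + δ * (fp - fm))))) =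
      fun y => y - (2 / (fp - fm)) * (fp * δ - √((fp * δ) ^ 2 - y * b)) := by
    funext y
    rw [mul_pow, show y * δ * (fp - fm) * (fm + δ * (fp - fm)) = y * b by ring]
  have hL : 1 - 2 / (fp - fm) * b / (2 * (fp * δ)) = (1 - fm / fp) * (1 - δ) := by
    field_simp
    ring
  rw [hmap]
  exact ⟨by simp [sqrt_sq ha.le], hL ▸ hasDerivAt_sub_mul_sub_sqrt_sq_sub_mul ha b _,
    one_sub_div_mul_one_sub_mem_Ioo hfm hfmfp hδ.le⟩
end

section
/- Let (Ω, μ) be a finite measure space, 0 < f₋ < f̄ < f₊ real constants, and let B = { f measurable : f₋ ≤ f ≤ f₊ μ-a.e. and ∫_Ω f dμ = f̄·μ(Ω) }. Let J : B → ℝ and let G assign to each f ∈ B an integrable function G(f) on Ω such that the convexity (subgradient) inequality J(g) − J(f) ≥ ∫_Ω (g − f)·G(f) dμ holds for all f, g ∈ B. Let (f_k) ⊆ B satisfy J(f_{k+1}) ≥ J(f_k) for all k and suppose the values J(f_k) are bounded above. Let (l_j) be a strictly increasing sequence of indices along which: (a) f_{l_j} converges weak-* to some f̂ ∈ B (i.e.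 ∫ f_{l_j} h dμ → ∫ f̂ h dμ for every integrable h); (b) f_{l_j + 1} converges weak-* to some f̄₀ ∈ B; (c) ∫_Ω |G(f_{l_j}) − G(f̂)| dμ → 0; (d) J(f_{l_j}) → J(f̂) and J(f_{l_j + 1}) → J(f̄₀); and (e) for every f ∈ B, ∫_Ω f·G(f_{l_j}) dμ ≤ ∫_Ω f_{l_j + 1}·G(f_{l_j}) dμ. Then f̂ satisfies the first-order necessary optimality condition ∫_Ω (f − f̂)·G(f̂) dμ ≤ 0 for all f ∈ B. -/
open MeasureTheory Filter

/-- Stationarity of accumulation points for the restarted accelerated rearrangement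
method (RARM). `B` is the relaxed admissible set, `G f = J′(f)` satisfies the convexity
(subgradient) inequality, the objective values along the iterates are nondecreasing and
bounded above, and along a subsequence of restart indices `l j` the iterates converge
weak-* to `f̂` (resp. the successors to `f̄₀`), the gradients converge in `L¹`, the
objective values converge, and the successor maximizes the linearized objective. Then
`f̂` satisfies the first-order necessary optimality condition
`∫ (f − f̂)·G(f̂) dμ ≤ 0` for all `f ∈ B`. -/
theorem rarm_accumulation_point_stationary {Ω : Type*} [MeasurableSpace Ω]
    (μ : Measure Ω) [IsFiniteMeasure μ]
    (fm fbar fp : ℝ) (h1 : 0 < fm) (h2 : fm < fbar) (h3 : fbar < fp)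
    (B : Set (Ω → ℝ))
    (hB : B = {f | Measurable f ∧ (∀ᵐ x ∂μ, fm ≤ f x ∧ f x ≤ fp) ∧
      ∫ x, f x ∂μ = fbar * (μ Set.univ).toReal})
    (J : (Ω → ℝ) → ℝ) (G : (Ω → ℝ) → Ω → ℝ)
    (hGint : ∀ f ∈ B, Integrable (G f) μ)
    (hconvex : ∀ f ∈ B, ∀ g ∈ B, J g - J f ≥ ∫ x, (g x - f x) * G f x ∂μ)
    (seq : ℕ → Ω → ℝ) (hseq : ∀ k, seq k ∈ B)
    (hmono : ∀ k, J (seq k) ≤ J (seq (k + 1)))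
    (hbdd : ∃ Mb : ℝ, ∀ k, J (seq k) ≤ Mb)
    (l : ℕ → ℕ) (hl : StrictMono l)
    (fhat : Ω → ℝ) (hfhat : fhat ∈ B)
    (ha : ∀ h : Ω → ℝ, Integrable h μ →
      Tendsto (fun j => ∫ x, seq (l j) x * h x ∂μ) atTop
        (nhds (∫ x, fhat x * h x ∂μ)))
    (fbar0 : Ω → ℝ) (hfbar0 : fbar0 ∈ B)
    (hb : ∀ h : Ω → ℝ, Integrable h μ →
      Tendsto (fun j => ∫ x, seq (l j + 1) x * h x ∂μ) atTop
        (nhds (∫ x, fbar0 x * h x ∂μ)))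
    (hc : Tendsto (fun j => ∫ x, |G (seq (l j)) x - G fhat x| ∂μ) atTop (nhds 0))
    (hd1 : Tendsto (fun j => J (seq (l j))) atTop (nhds (J fhat)))
    (hd2 : Tendsto (fun j => J (seq (l j + 1))) atTop (nhds (J fbar0)))
    (he : ∀ j, ∀ f ∈ B,
      ∫ x, f x * G (seq (l j)) x ∂μ ≤ ∫ x, seq (l j + 1) x * G (seq (l j)) x ∂μ) :
    ∀ f ∈ B, ∫ x, (f x - fhat x) * G fhat x ∂μ ≤ 0 := by

  intro f hf
  have hBmem : ∀ g ∈ B, Measurable g ∧ (∀ᵐ x ∂μ, fm ≤ g x ∧ g x ≤ fp) := by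
    intro g hg; rw [hB] at hg; exact ⟨hg.1, hg.2.1⟩
  have hbound : ∀ g ∈ B, ∀ᵐ x ∂μ, ‖g x‖ ≤ fp := by
    intro g hg
    filter_upwards [(hBmem g hg).2] with x hx
    rw [Real.norm_eq_abs, abs_le]
    exact ⟨le_trans (by linarith) hx.1, hx.2⟩
  have hprod : ∀ g ∈ B, ∀ h : Ω → ℝ, Integrable h μ →
      Integrable (fun x => g x * h x) μ := by
    intro g hg h hh
    exact hh.bdd_mul ((hBmem g hg).1.aestronglyMeasurable) (hbound g hg)
  have hGhat : Integrable (G fhat) μ := hGint fhat hfhat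
  have hGj : ∀ j, Integrable (G (seq (l j))) μ := fun j => hGint _ (hseq _)
  have hdiff : ∀ j, Integrable (fun x => G (seq (l j)) x - G fhat x) μ :=
    fun j => (hGj j).sub hGhat
  -- key: integrals of g·(G_j − Ĝ) tend to 0 for g j ∈ B
  have key : ∀ g : ℕ → Ω → ℝ, (∀ j, g j ∈ B) →
      Tendsto (fun j => ∫ x, g j x * (G (seq (l j)) x - G fhat x) ∂μ) atTop (nhds 0) := by
    intro g hg
    refine squeeze_zero_norm (fun j => ?_)
      (by simpa using hc.const_mul fp :
        Tendsto (fun j => fp * ∫ x, |G (seq (l j)) x - G fhat x| ∂μ) atTop (nhds 0))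
    rw [Real.norm_eq_abs]
    calc |∫ x, g j x * (G (seq (l j)) x - G fhat x) ∂μ|
          ≤ ∫ x, |g j x * (G (seq (l j)) x - G fhat x)| ∂μ := by
            simpa only [Real.norm_eq_abs] using
              norm_integral_le_integral_norm (μ := μ)
                (fun x => g j x * (G (seq (l j)) x - G fhat x))
        _ ≤ ∫ x, fp * |G (seq (l j)) x - G fhat x| ∂μ := by
            refine integral_mono_ae ((hprod (g j) (hg j) _ (hdiff j)).abs)
              ((hdiff j).abs.const_mul fp) ?_
            filter_upwards [hbound (g j) (hg j)] with x hx
            rw [abs_mul]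
            exact mul_le_mul_of_nonneg_right (by simpa using hx) (abs_nonneg _)
        _ = fp * ∫ x, |G (seq (l j)) x - G fhat x| ∂μ := integral_const_mul fp _
  have hsplit : ∀ g ∈ B, ∀ j, ∫ x, g x * G (seq (l j)) x ∂μ =
      ∫ x, g x * G fhat x ∂μ + ∫ x, g x * (G (seq (l j)) x - G fhat x) ∂μ := by
    intro g hg j
    rw [← integral_add (hprod g hg _ hGhat) (hprod g hg _ (hdiff j))]
    congr 1; ext x; ring
  -- limit of the left side of (e)
  have hA : Tendsto (fun j => ∫ x, f x * G (seq (l j)) x ∂μ) atTop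
      (nhds (∫ x, f x * G fhat x ∂μ)) := by
    have := (key (fun _ => f) (fun _ => hf)).const_add (∫ x, f x * G fhat x ∂μ)
    simpa [← hsplit f hf] using this
  -- limit of the right side of (e)
  have hB2 : Tendsto (fun j => ∫ x, seq (l j + 1) x * G (seq (l j)) x ∂μ) atTop
      (nhds (∫ x, fbar0 x * G fhat x ∂μ)) := by
    have h1' := hb (G fhat) hGhat
    have h2' := key (fun j => seq (l j + 1)) (fun j => hseq _)
    have := h1'.add h2'
    simpa [← hsplit _ (hseq _)] using this
  have hle : ∫ x, f x * G fhat x ∂μ ≤ ∫ x, fbar0 x * G fhat x ∂μ :=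
    le_of_tendsto_of_tendsto' hA hB2 (fun j => he j f hf)
  -- the objective values converge to a common limit
  have hmon : Monotone (fun k => J (seq k)) := monotone_nat_of_le_succ hmono
  have hbdd' : BddAbove (Set.range fun k => J (seq k)) := by
    obtain ⟨Mb, hMb⟩ := hbdd
    exact ⟨Mb, by rintro y ⟨k, rfl⟩; exact hMb k⟩
  have hJlim : Tendsto (fun k => J (seq k)) atTop (nhds (⨆ k, J (seq k))) :=
    tendsto_atTop_ciSup hmon hbdd'
  have hl1 : Tendsto (fun j => l j) atTop atTop := hl.tendsto_atTop
  have hl2 : Tendsto (fun j => l j + 1) atTop atTop :=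
    tendsto_atTop_mono (fun j => Nat.le_succ (l j)) hl1
  have hJ1 : J fhat = ⨆ k, J (seq k) :=
    tendsto_nhds_unique hd1 (hJlim.comp hl1)
  have hJ2 : J fbar0 = ⨆ k, J (seq k) :=
    tendsto_nhds_unique hd2 (hJlim.comp hl2)
  have hcv := hconvex fhat hfhat fbar0 hfbar0
  have hintsub : ∀ g ∈ B, ∫ x, (g x - fhat x) * G fhat x ∂μ =
      ∫ x, g x * G fhat x ∂μ - ∫ x, fhat x * G fhat x ∂μ := by
    intro g hg
    rw [← integral_sub (hprod g hg _ hGhat) (hprod fhat hfhat _ hGhat)]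
    congr 1; ext x; ring
  rw [hintsub fbar0 hfbar0] at hcv
  rw [hintsub f hf]
  have : J fbar0 - J fhat = 0 := by rw [hJ1, hJ2]; ring
  linarith
end

section
/- Let (Ω, μ) be a finite measure space, g : Ω → ℝ integrable, c ∈ ℝ with μ({x : g(x) = c}) = 0, and V ≥ 0. Let D = {x : g(x) ≥ c} and assume μ(D) = V. If E ⊆ Ω is measurable with μ(E) = V and ∫_E g dμ = ∫_D g dμ, then μ(E Δ D) = 0; that is, the superlevel set is the unique (up to null sets) maximizer of ∫_F g dμ among measurable sets F of measure V. -/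
/-!
Write `D = {c ≤ g}`, `A = E \ D` and `B = D \ E`. Since `μ E = μ D`, also `μ A = μ B`, so
subtracting the constant `c` does not change `∫_D g - ∫_E g`, which therefore equals
`∫_B (g - c) + ∫_A (c - g)`. Both integrands are nonnegative and the sum vanishes; as
`c - g > 0` on `A`, this forces `μ A = 0`, and then `μ B = μ A = 0`.
-/

open MeasureTheory Set
open scoped ENNReal

section

variable {Ω : Type*} [MeasurableSpace Ω] {μ : Measure Ω} {s t : Set Ω}

theorem measure_eq_zero_of_setIntegral_nonpos_of_pos {f : Ω → ℝ} (hs : NullMeasurableSet s μ)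
    (hf : IntegrableOn f s μ) (hpos : ∀ x ∈ s, 0 < f x) (hint : ∫ x in s, f x ∂μ ≤ 0) :
    μ s = 0 := by
  have hf_nonneg : 0 ≤ᵐ[μ.restrict s] f :=
    (ae_restrict_iff'₀ hs).2 (ae_of_all _ fun x hx => (hpos x hx).le)
  have hsupp : Function.support f ∩ s = s :=
    inter_eq_right.2 fun x hx => (hpos x hx).ne'
  by_contra hμs
  have := (setIntegral_pos_iff_support_of_nonneg_ae hf_nonneg hf).2
    (by rw [hsupp]; exact pos_iff_ne_zero.2 hμs)
  linarith

theorem setIntegral_sub_setIntegral_eq_of_measure_eq {g : Ω → ℝ}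
    (hg : IntegrableOn g (s ∪ t) μ)
    (hs : NullMeasurableSet s μ) (ht : NullMeasurableSet t μ) (hst : μ s = μ t) (hfin : μ s ≠ ∞)
    (c : ℝ) :
    ∫ x in s, g x ∂μ - ∫ x in t, g x ∂μ =
      ∫ x in s \ t, (g x - c) ∂μ + ∫ x in t \ s, (c - g x) ∂μ := by
  have hg_s : IntegrableOn g s μ := hg.mono_set subset_union_left
  have hg_t : IntegrableOn g t μ := hg.mono_set subset_union_right
  have hc_st : IntegrableOn (fun _ => c) (s \ t) μ :=
    integrableOn_const (measure_ne_top_of_subset sdiff_subset hfin)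
  have hc_ts : IntegrableOn (fun _ => c) (t \ s) μ :=
    integrableOn_const (measure_ne_top_of_subset sdiff_subset (hst ▸ hfin))
  have hsplit_s : ∫ x in s ∩ t, g x ∂μ + ∫ x in s \ t, g x ∂μ = ∫ x in s, g x ∂μ :=
    integral_inter_add_sdiff₀ ht hg_s
  have hsplit_t : ∫ x in s ∩ t, g x ∂μ + ∫ x in t \ s, g x ∂μ = ∫ x in t, g x ∂μ := by
    rw [inter_comm]; exact integral_inter_add_sdiff₀ hs hg_t
  have hdiff : μ.real (s \ t) = μ.real (t \ s) := by
    rw [measureReal_def, measureReal_def,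
      measure_sdiff_symm hs ht hst (measure_ne_top_of_subset inter_subset_left hfin)]
  rw [integral_sub (hg_s.mono_set sdiff_subset) hc_st,
    integral_sub hc_ts (hg_t.mono_set sdiff_subset),
    setIntegral_const, setIntegral_const, smul_eq_mul, smul_eq_mul, hdiff]
  linarith

end

theorem bathtub_superlevel_unique_general {Ω : Type*} [MeasurableSpace Ω] (μ : Measure Ω)
    [IsFiniteMeasure μ] (g : Ω → ℝ) (hg : Integrable g μ)
    (c V : ℝ)
    (hDV : μ {x | c ≤ g x} = ENNReal.ofReal V)
    (E : Set Ω) (hE : MeasurableSet E) (hEV : μ E = ENNReal.ofReal V)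
    (heq : ∫ x in E, g x ∂μ = ∫ x in {x | c ≤ g x}, g x ∂μ) :
    μ (symmDiff E {x | c ≤ g x}) = 0 := by
  set D := {x | c ≤ g x}
  have hD : NullMeasurableSet D μ := nullMeasurableSet_le aemeasurable_const hg.aemeasurable
  have hDE : μ D = μ E := hDV.trans hEV.symm
  have hsplit := setIntegral_sub_setIntegral_eq_of_measure_eq hg.integrableOn hD
    hE.nullMeasurableSet hDE (measure_ne_top _ _) c
  have hB_nonneg : 0 ≤ ∫ x in D \ E, (g x - c) ∂μ :=
    setIntegral_nonneg_of_ae_restrict <| (ae_restrict_iff'₀ (hD.diff hE.nullMeasurableSet)).2 <|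
      ae_of_all _ fun x hx => sub_nonneg.2 hx.1
  have hA : μ (E \ D) = 0 :=
    measure_eq_zero_of_setIntegral_nonpos_of_pos (f := fun x => c - g x)
      (hE.nullMeasurableSet.diff hD)
      ((integrableOn_const (measure_ne_top _ _)).sub hg.integrableOn)
      (fun x hx => sub_pos.2 (not_le.1 hx.2)) (by linarith)
  have hB : μ (D \ E) = 0 :=
    (measure_sdiff_symm hD hE.nullMeasurableSet hDE (measure_ne_top _ _)).trans hA
  exact measure_symmDiff_eq_zero_iff.2 (ae_eq_set.2 ⟨hA, hB⟩)

/-- Uniqueness in the bathtub principle: on a finite measure space, if the level set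
`{g = c}` is null, `D = {g ≥ c}` has measure `V`, and a measurable set `E` with
`μ E = V` achieves `∫_E g dμ = ∫_D g dμ`, then `μ (E Δ D) = 0`: the superlevel set is
the unique (up to null sets) maximizer among sets of measure `V`. -/
theorem bathtub_superlevel_unique {Ω : Type*} [MeasurableSpace Ω] (μ : Measure Ω)
    [IsFiniteMeasure μ] (g : Ω → ℝ) (hg : Integrable g μ)
    (c V : ℝ) (hV : 0 ≤ V)
    (hc : μ {x | g x = c} = 0)
    (hDV : μ {x | c ≤ g x} = ENNReal.ofReal V)
    (E : Set Ω) (hE : MeasurableSet E) (hEV : μ E = ENNReal.ofReal V)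
    (heq : ∫ x in E, g x ∂μ = ∫ x in {x | c ≤ g x}, g x ∂μ) :
    μ (symmDiff E {x | c ≤ g x}) = 0 :=
  bathtub_superlevel_unique_general μ g hg c V hDV E hE hEV heq
end

section
/- Let (Ω, μ) be a finite measure space, 0 < f₋ < f̄ < f₊ real constants, V = μ(Ω)·(f̄ − f₋)/(f₊ − f₋), and B = { f measurable : f₋ ≤ f ≤ f₊ μ-a.e. and ∫_Ω f dμ = f̄·μ(Ω) }. Let ĝ : Ω → ℝ be integrable with all level sets null (μ({ĝ = s}) = 0 for every s ∈ ℝ), and set c = sup{ s ∈ ℝ : μ({x : ĝ(x) ≥ s}) ≥ V } and D̂ = {x ∈ Ω : ĝ(x) ≥ c}. If f̂ ∈ B satisfies ∫_Ω f ĝ dμ ≤ ∫_Ω f̂ ĝ dμ for every f ∈ B, then f̂ = f₋ + (f₊ − f₋)·χ_{D̂} μ-almost everywhere; in particular f̂ is a bang–bang function in the admissible class A. -/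
/-!
Write `F` for the bang–bang function on `{c ≤ ĝ}`. Pointwise `(F - f)(ĝ - c) ≥ 0` for every
`f` with values in `[f₋, f₊]`, and when `f` and `F` have the same mean its integral equals
`∫ F ĝ - ∫ f ĝ`. So once `F ∈ B`, maximality of `f̂` makes this nonnegative function integrate
to zero, and as `ĝ ≠ c` a.e. this forces `f̂ = F` a.e. That `F ∈ B` is the choice of `c`:
since `ĝ` has no atoms, `s ↦ μ{s ≤ ĝ}` is continuous, so `μ{c ≤ ĝ} = V` exactly.
-/

open MeasureTheory Set Filter Topology

section Quantile

variable {ν : Measure ℝ} {v : ENNReal} {c : ℝ}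

theorem le_measure_Ici_of_forall_lt [IsFiniteMeasure ν] (h : ∀ s < c, v ≤ ν (Ici s)) :
    v ≤ ν (Ici c) := by
  obtain ⟨u, hu_mono, hu_lt, hu_lim⟩ := exists_seq_strictMono_tendsto c
  have hIci : Ici c = ⋂ n, Ici (u n) := by
    rw [← iSup_eq_of_forall_le_of_tendsto (fun n ↦ (hu_lt n).le) hu_lim]
    exact Set.Ici_ciSup ⟨c, forall_mem_range.2 fun n ↦ (hu_lt n).le⟩
  have hanti : Antitone fun n ↦ Ici (u n) := antitone_Ici.comp_monotone hu_mono.monotone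
  rw [hIci, hanti.measure_iInter (fun _ ↦ measurableSet_Ici.nullMeasurableSet)
    ⟨0, measure_ne_top _ _⟩]
  exact le_iInf fun n ↦ h _ (hu_lt n)

theorem measure_Ioi_le_of_forall_gt (h : ∀ s > c, ν (Ici s) ≤ v) : ν (Ioi c) ≤ v := by
  obtain ⟨u, hu_anti, hu_gt, hu_lim⟩ := exists_seq_strictAnti_tendsto c
  have hmono : Monotone fun n ↦ Ici (u n) := antitone_Ici.comp hu_anti.antitone
  rw [← iUnion_Ici_eq_Ioi_of_lt_of_tendsto hu_gt hu_lim, hmono.measure_iUnion]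
  exact iSup_le fun n ↦ h _ (hu_gt n)

theorem nonempty_setOf_le_measure_Ici (hv : v < ν univ) : {s | v ≤ ν (Ici s)}.Nonempty :=
  ((tendsto_measure_Ici_atBot ν).eventually (lt_mem_nhds hv)).exists.imp fun _ ↦ le_of_lt

theorem bddAbove_setOf_le_measure_Ici [IsFiniteMeasure ν] (hv : 0 < v) :
    BddAbove {s | v ≤ ν (Ici s)} := by
  have hempty : ⋂ s : ℝ, Ici s = ∅ :=
    eq_empty_of_forall_notMem fun x hx ↦ (lt_add_one x).not_ge (mem_iInter.1 hx (x + 1))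
  have hlim := tendsto_measure_iInter_atTop (μ := ν)
    (fun _ ↦ measurableSet_Ici.nullMeasurableSet) antitone_Ici ⟨0, measure_ne_top _ _⟩
  rw [hempty, measure_empty] at hlim
  obtain ⟨x, hx⟩ := (hlim.eventually (gt_mem_nhds hv)).exists
  refine ⟨x, fun s hs ↦ le_of_not_gt fun hxs ↦ ?_⟩
  exact (hx.trans_le' (measure_mono (Ici_subset_Ici.2 hxs.le))).not_ge hs

theorem measure_Ici_sSup_setOf_le_measure_Ici [IsFiniteMeasure ν] [NullSingletonClass ν]
    (h0 : 0 < v) (hv : v < ν univ) : ν (Ici (sSup {s | v ≤ ν (Ici s)})) = v := by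
  set S := {s | v ≤ ν (Ici s)}
  have hne := nonempty_setOf_le_measure_Ici hv
  have hbdd := bddAbove_setOf_le_measure_Ici (ν := ν) h0
  refine le_antisymm ?_ (le_measure_Ici_of_forall_lt fun s hs ↦ ?_)
  · rw [← measure_congr Ioi_ae_eq_Ici]
    exact measure_Ioi_le_of_forall_gt fun s hs ↦
      (not_le.1 (notMem_of_csSup_lt (s := S) hs hbdd)).le
  · obtain ⟨t, ht, hst⟩ := exists_lt_of_lt_csSup hne hs
    exact ht.trans (measure_mono (Ici_subset_Ici.2 hst.le))

theorem measure_setOf_sSup_le_eq {Ω : Type*} [MeasurableSpace Ω] {μ : Measure Ω}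
    [IsFiniteMeasure μ] {g : Ω → ℝ} (hg : AEMeasurable g μ) (hlevel : ∀ s, μ {x | g x = s} = 0)
    (h0 : 0 < v) (hv : v < μ univ) :
    μ {x | sSup {s | v ≤ μ {x | s ≤ g x}} ≤ g x} = v := by
  have hmap : ∀ s, μ {x | s ≤ g x} = μ.map g (Ici s) := fun s ↦
    (Measure.map_apply_of_aemeasurable hg measurableSet_Ici).symm
  have : NullSingletonClass (μ.map g) :=
    ⟨fun s ↦ (Measure.map_apply_of_aemeasurable hg (measurableSet_singleton s)).trans (hlevel s)⟩
  simp_rw [hmap]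
  exact measure_Ici_sSup_setOf_le_measure_Ici h0
    (by rwa [Measure.map_apply_of_aemeasurable hg .univ, preimage_univ])

end Quantile

section BangBang

variable {Ω : Type*} {a b c : ℝ} {D : Set Ω}

noncomputable def bangBang (a b : ℝ) (D : Set Ω) (x : Ω) : ℝ := a + (b - a) * D.indicator 1 x

@[simp] theorem bangBang_of_mem {x : Ω} (hx : x ∈ D) : bangBang a b D x = b := by
  simp [bangBang, hx]

@[simp] theorem bangBang_of_notMem {x : Ω} (hx : x ∉ D) : bangBang a b D x = a := by
  simp [bangBang, hx]

theorem bangBang_mem_Icc (hab : a ≤ b) (x : Ω) : bangBang a b D x ∈ Icc a b := by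
  by_cases hx : x ∈ D <;> simp [hx, hab]

theorem bangBang_sub_mul_sub_nonneg {x : Ω} {t y : ℝ} (hxD : x ∈ D ↔ c ≤ y)
    (ht : t ∈ Icc a b) : 0 ≤ (bangBang a b D x - t) * (y - c) := by
  by_cases hx : x ∈ D
  · rw [bangBang_of_mem hx]
    exact mul_nonneg (sub_nonneg.2 ht.2) (sub_nonneg.2 (hxD.1 hx))
  · rw [bangBang_of_notMem hx]
    exact mul_nonneg_of_nonpos_of_nonpos (sub_nonpos.2 ht.1)
      (sub_nonpos.2 (not_le.1 (mt hxD.2 hx)).le)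

variable [MeasurableSpace Ω] {μ : Measure Ω}

theorem measurable_bangBang (hD : MeasurableSet D) : Measurable (bangBang a b D) :=
  measurable_const.add (measurable_const.mul (measurable_one.indicator hD))

theorem integral_bangBang [IsFiniteMeasure μ] (hD : MeasurableSet D) :
    ∫ x, bangBang a b D x ∂μ = a * μ.real univ + (b - a) * μ.real D := by
  have hind : Integrable (D.indicator (1 : Ω → ℝ)) μ := (integrable_const (1 : ℝ)).indicator hD
  unfold bangBang
  rw [integral_add (integrable_const a) (hind.const_mul _),
    integral_const_mul, integral_indicator_one hD, integral_const, smul_eq_mul, mul_comm]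

theorem integrable_mul_of_ae_mem_Icc {f g : Ω → ℝ} (hg : Integrable g μ)
    (hf : AEStronglyMeasurable f μ) (hfab : ∀ᵐ x ∂μ, f x ∈ Icc a b) :
    Integrable (fun x ↦ f x * g x) μ :=
  hg.bdd_mul hf (hfab.mono fun _ hx ↦ abs_le_max_abs_abs hx.1 hx.2)

theorem integrable_of_ae_mem_Icc [IsFiniteMeasure μ] {f : Ω → ℝ} (hf : AEStronglyMeasurable f μ)
    (hfab : ∀ᵐ x ∂μ, f x ∈ Icc a b) : Integrable f μ :=
  .of_bound hf _ (hfab.mono fun _ hx ↦ abs_le_max_abs_abs hx.1 hx.2)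

/-- The bathtub principle, uniqueness part. -/
theorem ae_eq_bangBang_of_integral_mul_le [IsFiniteMeasure μ] {f g : Ω → ℝ}
    (hg : Integrable g μ) (hf : AEStronglyMeasurable f μ) (hfab : ∀ᵐ x ∂μ, f x ∈ Icc a b)
    (hD : MeasurableSet D) (hDg : ∀ᵐ x ∂μ, x ∈ D ↔ c ≤ g x) (hlevel : μ {x | g x = c} = 0)
    (hint : ∫ x, bangBang a b D x ∂μ = ∫ x, f x ∂μ)
    (hle : ∫ x, bangBang a b D x * g x ∂μ ≤ ∫ x, f x * g x ∂μ) :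
    f =ᵐ[μ] bangBang a b D := by
  set F := bangBang a b D
  have hF_meas : AEStronglyMeasurable F μ := (measurable_bangBang hD).aestronglyMeasurable
  have hFab : ∀ᵐ x ∂μ, F x ∈ Icc (min a b) (max a b) := ae_of_all _ fun x ↦ by
    by_cases hx : x ∈ D <;> simp [F, hx]
  have hFg := integrable_mul_of_ae_mem_Icc hg hF_meas hFab
  have hfg := integrable_mul_of_ae_mem_Icc hg hf hfab
  have hF := integrable_of_ae_mem_Icc hF_meas hFab
  have hf_int := integrable_of_ae_mem_Icc hf hfab
  have hexpand : (fun x ↦ (F x - f x) * (g x - c)) =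
      fun x ↦ (F x * g x - f x * g x) - c * (F x - f x) := by
    funext x; ring
  have hgap_int : Integrable (fun x ↦ (F x - f x) * (g x - c)) μ := by
    rw [hexpand]; exact (hFg.sub hfg).sub ((hF.sub hf_int).const_mul c)
  have hgap : ∫ x, (F x - f x) * (g x - c) ∂μ =
      (∫ x, F x * g x ∂μ - ∫ x, f x * g x ∂μ) - c * (∫ x, F x ∂μ - ∫ x, f x ∂μ) := by
    have hA : Integrable (fun x ↦ F x * g x - f x * g x) μ := hFg.sub hfg
    have hB : Integrable (fun x ↦ c * (F x - f x)) μ := (hF.sub hf_int).const_mul c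
    rw [hexpand, integral_sub hA hB, integral_sub hFg hfg, integral_const_mul,
      integral_sub hF hf_int]
  have hnonneg : 0 ≤ᵐ[μ] fun x ↦ (F x - f x) * (g x - c) := by
    filter_upwards [hfab, hDg] with x hfx hx using bangBang_sub_mul_sub_nonneg hx hfx
  have hzero : (fun x ↦ (F x - f x) * (g x - c)) =ᵐ[μ] 0 := by
    refine (integral_eq_zero_iff_of_nonneg_ae hnonneg hgap_int).1 (le_antisymm ?_
      (integral_nonneg_of_ae hnonneg))
    rw [hgap, hint, sub_self, mul_zero, sub_zero]
    exact sub_nonpos.2 hle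
  have hne : ∀ᵐ x ∂μ, g x ≠ c := measure_eq_zero_iff_ae_notMem.1 hlevel
  filter_upwards [hzero, hne] with x hx hxc
  have := (mul_eq_zero.1 hx).resolve_right (sub_ne_zero.2 hxc)
  exact (sub_eq_zero.1 this).symm

end BangBang

theorem rarm_maximizer_is_bang_bang_general {Ω : Type*} [MeasurableSpace Ω] (μ : Measure Ω)
    [IsFiniteMeasure μ]
    (fm fbar fp : ℝ) (h2 : fm < fbar) (h3 : fbar < fp)
    (V : ℝ) (hV : V = (μ Set.univ).toReal * (fbar - fm) / (fp - fm))
    (B : Set (Ω → ℝ))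
    (hB : B = {f | Measurable f ∧ (∀ᵐ x ∂μ, fm ≤ f x ∧ f x ≤ fp) ∧
      ∫ x, f x ∂μ = fbar * (μ Set.univ).toReal})
    (ghat : Ω → ℝ) (hg : Integrable ghat μ)
    (hlevel : ∀ s : ℝ, μ {x | ghat x = s} = 0)
    (c : ℝ) (hc : c = sSup {s : ℝ | ENNReal.ofReal V ≤ μ {x | s ≤ ghat x}})
    (Dhat : Set Ω) (hD : Dhat = {x | c ≤ ghat x})
    (fhat : Ω → ℝ) (hfhat : fhat ∈ B)
    (hmax : ∀ f ∈ B, ∫ x, f x * ghat x ∂μ ≤ ∫ x, fhat x * ghat x ∂μ) :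
    ∀ᵐ x ∂μ, fhat x = fm + (fp - fm) * Dhat.indicator 1 x := by
  rcases eq_zero_or_neZero μ with rfl | hμ
  · simp
  subst hD
  obtain ⟨hfhat_meas, hfhat_bd, hfhat_int⟩ := hB ▸ hfhat
  have hM : 0 < (μ univ).toReal := ENNReal.toReal_pos (NeZero.ne _) (measure_ne_top _ _)
  have hV_pos : 0 < V := by rw [hV]; exact div_pos (mul_pos hM (by linarith)) (by linarith)
  have hV_lt : V < (μ univ).toReal := by
    rw [hV, div_lt_iff₀ (by linarith)]; nlinarith
  have hDhat : μ {x | c ≤ ghat x} = ENNReal.ofReal V := by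
    rw [hc]
    exact measure_setOf_sSup_le_eq hg.aemeasurable hlevel (ENNReal.ofReal_pos.2 hV_pos)
      ((ENNReal.ofReal_lt_iff_lt_toReal hV_pos.le (measure_ne_top _ _)).2 hV_lt)
  -- `{c ≤ ghat}` need not be measurable, but elements of `B` must be
  set D := {x | c ≤ hg.aemeasurable.mk ghat x}
  have hD_meas : MeasurableSet D :=
    measurableSet_le measurable_const hg.aemeasurable.measurable_mk
  have hDD : ∀ᵐ x ∂μ, x ∈ D ↔ c ≤ ghat x := by
    filter_upwards [hg.aemeasurable.ae_eq_mk] with x hx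
    simp [D, hx]
  have hμD : μ D = ENNReal.ofReal V :=
    (measure_congr (eventuallyEq_set.2 hDD : D =ᵐ[μ] {x | c ≤ ghat x})).trans hDhat
  have hbb_int : ∫ x, bangBang fm fp D x ∂μ = fbar * (μ univ).toReal := by
    rw [integral_bangBang hD_meas, measureReal_def, measureReal_def, hμD,
      ENNReal.toReal_ofReal hV_pos.le, hV]
    have : fp - fm ≠ 0 := sub_ne_zero.2 (h2.trans h3).ne'
    field_simp
    ring
  have hbb : bangBang fm fp D ∈ B := hB ▸
    ⟨measurable_bangBang hD_meas, ae_of_all _ (bangBang_mem_Icc (h2.trans h3).le), hbb_int⟩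
  have hfhat_eq := ae_eq_bangBang_of_integral_mul_le hg hfhat_meas.aestronglyMeasurable
    hfhat_bd hD_meas hDD (hlevel c) (hbb_int.trans hfhat_int.symm) (hmax _ hbb)
  filter_upwards [hfhat_eq, hDD] with x hx hxD
  simp only [hx, bangBang, indicator_apply, hxD, mem_ofPred_eq]

/-- Part (ii) of the RARM stationarity theorem: let `B` be the relaxed admissible set of
two-phase densities with prescribed mean `f̄`, let `V = μ(Ω)(f̄ − f₋)/(f₊ − f₋)`, let
`ĝ` be integrable with all level sets null, `c = sup{s : μ{ĝ ≥ s} ≥ V}` and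
`D̂ = {ĝ ≥ c}`. If `f̂ ∈ B` maximizes `f ↦ ∫ f ĝ dμ` over `B`, then
`f̂ = f₋ + (f₊ − f₋)χ_{D̂}` `μ`-a.e.; in particular `f̂` is bang–bang. -/
theorem rarm_maximizer_is_bang_bang {Ω : Type*} [MeasurableSpace Ω] (μ : Measure Ω)
    [IsFiniteMeasure μ]
    (fm fbar fp : ℝ) (h1 : 0 < fm) (h2 : fm < fbar) (h3 : fbar < fp)
    (V : ℝ) (hV : V = (μ Set.univ).toReal * (fbar - fm) / (fp - fm))
    (B : Set (Ω → ℝ))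
    (hB : B = {f | Measurable f ∧ (∀ᵐ x ∂μ, fm ≤ f x ∧ f x ≤ fp) ∧
      ∫ x, f x ∂μ = fbar * (μ Set.univ).toReal})
    (ghat : Ω → ℝ) (hg : Integrable ghat μ)
    (hlevel : ∀ s : ℝ, μ {x | ghat x = s} = 0)
    (c : ℝ) (hc : c = sSup {s : ℝ | ENNReal.ofReal V ≤ μ {x | s ≤ ghat x}})
    (Dhat : Set Ω) (hD : Dhat = {x | c ≤ ghat x})
    (fhat : Ω → ℝ) (hfhat : fhat ∈ B)
    (hmax : ∀ f ∈ B, ∫ x, f x * ghat x ∂μ ≤ ∫ x, fhat x * ghat x ∂μ) :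
    ∀ᵐ x ∂μ, fhat x = fm + (fp - fm) * Dhat.indicator 1 x :=
  rarm_maximizer_is_bang_bang_general μ fm fbar fp h2 h3 V hV B hB ghat hg hlevel c hc Dhat hD fhat
    hfhat hmax
end
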